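/- arXiv:1901.07882 — 5 statements merged into one kernel-verified Lean document; each statement's English description precedes it below -/
import Mathlib

section
/- If 2^{u+1}−1 = t·v with odd integers t ≥ 3 and v ≥ 3, then a = (2^{u+1}−1)·2^u can be written as S_{n,m}(2,3) with n = v ≥ 3 and m = ((t²−1)v + t − 3)/2, i.e., n(n+2m+3) = (2^{u+1}−1)·2^{u+1}. -/
theorem mersenne_composite_case (u t v : ℕ) (hu : 1 ≤ u)
    (ht : Odd t) (hv : Odd v) (ht3 : 3 ≤ t) (hv3 : 3 ≤ v)
    (hfact : 2 ^ (u + 1) - 1 = t * v) :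
    ∃ m : ℕ, 2 * m = (t ^ 2 - 1) * v + t - 3 ∧
      v * (v + 2 * m + 3) = (2 ^ (u + 1) - 1) * 2 ^ (u + 1) := by
  obtain ⟨a, ha⟩ := ht
  obtain ⟨b, hb⟩ := hv
  have ha1 : 1 ≤ a := by omega
  have hp : 1 ≤ 2 ^ (u + 1) := Nat.one_le_two_pow
  have h2 : 2 ^ (u + 1) = t * v + 1 := by omega
  subst ha hb
  refine ⟨(2 * a ^ 2 + 2 * a) * (2 * b + 1) + (a - 1), ?_, ?_⟩
  · have h1 : 1 ≤ (2 * a + 1) ^ 2 := by nlinarith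
    have h3 : 3 ≤ ((2 * a + 1) ^ 2 - 1) * (2 * b + 1) + (2 * a + 1) := by
      have : (2 * a + 1) ^ 2 = 4 * a ^ 2 + 4 * a + 1 := by ring
      nlinarith
    zify [ha1, h1, h3]
    ring
  · rw [hfact, h2]
    zify [ha1]
    ring
end

section
/- If 2^{u+1}−1 is prime (u ≥ 1), then the only solution in positive integers of n(n+2m+3) = (2^{u+1}−1)·2^{u+1} with n ≥ 1, m ≥ 0 is n = 1 and m = (2^{u+1}−1)·2^u − 2; in particular (2^{u+1}−1)·2^u is not a sum of two or more consecutive terms of the progression a_k = k+1 starting after the first term. -/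
theorem mersenne_prime_case (u : ℕ) (hu : 1 ≤ u) (hp : Nat.Prime (2 ^ (u + 1) - 1)) :
    ∀ n m : ℕ, 1 ≤ n →
      n * (n + 2 * m + 3) = (2 ^ (u + 1) - 1) * 2 ^ (u + 1) →
      n = 1 ∧ m = (2 ^ (u + 1) - 1) * 2 ^ u - 2 := by
  intro n m hn heq
  set M := 2 ^ (u + 1) - 1 with hMdef
  have hpow : 2 ^ (u + 1) = 2 * 2 ^ u := by ring
  have hu2 : 2 ≤ 2 ^ u := by
    calc 2 = 2 ^ 1 := rfl
    _ ≤ 2 ^ u := Nat.pow_le_pow_right (by norm_num) hu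
  have hM3 : 3 ≤ M := by
    have : 4 ≤ 2 ^ (u + 1) := by omega
    omega
  have hcop : Nat.Coprime (2 ^ (u + 1)) M := by
    have : ¬ (2 ∣ M) := by
      intro h
      have : 2 ∣ 2 ^ (u + 1) := dvd_pow_self 2 (Nat.succ_ne_zero u)
      omega
    exact Nat.Coprime.pow_left _ ((Nat.prime_two.coprime_iff_not_dvd).mpr this)
  rcases Nat.even_or_odd n with he | ho
  · -- n even: n + 2m + 3 is odd, divides M
    exfalso
    have hdvd : (n + 2 * m + 3) ∣ M * 2 ^ (u + 1) := ⟨n, by linarith [heq.symm, Nat.mul_comm n (n + 2 * m + 3)]⟩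
    have hodd : ¬ (2 ∣ (n + 2 * m + 3)) := by
      obtain ⟨k, hk⟩ := he
      omega
    have hcop2 : Nat.Coprime (n + 2 * m + 3) (2 ^ (u + 1)) := by
      apply Nat.Coprime.pow_right
      rw [Nat.coprime_comm]
      exact (Nat.prime_two.coprime_iff_not_dvd).mpr hodd
    have hdM : (n + 2 * m + 3) ∣ M := (Nat.Coprime.dvd_of_dvd_mul_right hcop2 hdvd)
    have := (Nat.dvd_prime hp).mp hdM
    rcases this with h1 | hM
    · omega
    · -- n + 2m + 3 = M, then n * M = M * (M+1) so n = M + 1 > M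
      have hMpos : 0 < M := by omega
      have h2 : n * M = M * 2 ^ (u + 1) := by rw [hM] at heq; exact heq
      have h3 : M * n = M * 2 ^ (u + 1) := by linarith [Nat.mul_comm n M]
      have := Nat.eq_of_mul_eq_mul_left hMpos h3
      omega
  · -- n odd: n divides M
    have hdvd : n ∣ M * 2 ^ (u + 1) := ⟨_, heq.symm⟩
    have hcop2 : Nat.Coprime n (2 ^ (u + 1)) := by
      apply Nat.Coprime.pow_right
      rw [Nat.coprime_comm]
      exact (Nat.prime_two.coprime_iff_not_dvd).mpr (by
        obtain ⟨k, hk⟩ := ho; omega)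
    have hdM : n ∣ M := Nat.Coprime.dvd_of_dvd_mul_right hcop2 hdvd
    rcases (Nat.dvd_prime hp).mp hdM with h1 | hM
    · subst h1
      constructor
      · rfl
      · have : 2 * m + 4 = M * (2 * 2 ^ u) := by rw [← hpow]; linarith [heq]
        have h4 : 2 * m + 4 = 2 * (M * 2 ^ u) := by
          linarith [this, Nat.mul_left_comm M 2 (2 ^ u)]
        have h5 : m + 2 = M * 2 ^ u := by omega
        rw [← h5]
        omega
    · exfalso
      rw [hM] at heq
      have := Nat.eq_of_mul_eq_mul_left (by omega : 0 < M) heq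
      have hM1 : M + 1 = 2 ^ (u + 1) := by rw [hMdef]; omega
      omega
end

section
/- If 2^{u+1}+1 = t·v with odd integers t ≥ 3 and v ≥ 3, then a = (2^{u+1}+1)·2^u can be written as S_{n,m}(2,3) with n = v and m = ((t²−1)v − t − 3)/2, i.e., n(n+2m+3) = (2^{u+1}+1)·2^{u+1}. -/
theorem fermat_composite_case (u t v : ℕ) (hu : 1 ≤ u)
    (ht : Odd t) (hv : Odd v) (ht3 : 3 ≤ t) (hv3 : 3 ≤ v)
    (hfact : 2 ^ (u + 1) + 1 = t * v) :
    ∃ m : ℕ, 2 * m = (t ^ 2 - 1) * v - t - 3 ∧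
      v * (v + 2 * m + 3) = (2 ^ (u + 1) + 1) * 2 ^ (u + 1) := by
  set N := 2 ^ (u + 1) with hNdef
  have hN4 : 4 ≤ N := by
    have : 2 ^ 2 ≤ 2 ^ (u + 1) := Nat.pow_le_pow_right (by norm_num) (by omega)
    simpa using this
  obtain ⟨a, ha⟩ := ht
  obtain ⟨b, hb⟩ := hv
  have hNe : N = 2 * 2 ^ u := by rw [hNdef, pow_succ]; ring
  -- key nonlinear fact
  have h1 : t * N + t = t * t * v := by
    have : t * (N + 1) = t * (t * v) := by rw [hfact]
    linarith [this]
  have h2 : (t ^ 2 - 1) * v = t * t * v - v := by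
    rw [sq, Nat.sub_mul, one_mul]
  have hNv : v + 3 ≤ t * N := by nlinarith
  have hEven : t * N = 2 * (t * 2 ^ u) := by rw [hNe]; ring
  refine ⟨(t * N - v - 3) / 2, ?_, ?_⟩
  · rw [h2]
    generalize t * N = P at *
    generalize t * t * v = Q at *
    generalize t * 2 ^ u = R at *
    omega
  · have hsum : v + 2 * ((t * N - v - 3) / 2) + 3 = t * N := by
      generalize t * N = P at *
      generalize t * 2 ^ u = R at *
      omega
    rw [hsum]
    calc v * (t * N) = (t * v) * N := by ring
      _ = (N + 1) * N := by rw [← hfact]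
end

section
/- If 2^{u+1}+1 is prime (u ≥ 1), then the only solution of n(n+2m+3) = (2^{u+1}+1)·2^{u+1} with n ≥ 1, m ≥ 0 is n = 1 and m = (2^{u+1}+1)·2^u − 2. -/
theorem fermat_prime_case (u : ℕ) (hu : 1 ≤ u) (hp : Nat.Prime (2 ^ (u + 1) + 1)) :
    ∀ n m : ℕ, 1 ≤ n →
      n * (n + 2 * m + 3) = (2 ^ (u + 1) + 1) * 2 ^ (u + 1) →
      n = 1 ∧ m = (2 ^ (u + 1) + 1) * 2 ^ u - 2 := by
  intro n m hn heq
  set k := u + 1 with hk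
  set p := 2 ^ k + 1 with hpdef
  have hq2 : 2 ^ k = 2 * 2 ^ u := by rw [hk, pow_succ]; ring
  rcases Nat.even_or_odd n with he | ho
  · -- n even, so n + 2m + 3 is odd and divides p
    have hodd : Odd (n + 2 * m + 3) := by
      rcases he with ⟨t, ht⟩; exact ⟨t + m + 1, by omega⟩
    have hcop : Nat.Coprime (n + 2 * m + 3) (2 ^ k) := by
      apply Nat.Coprime.pow_right
      simpa [Nat.coprime_two_right] using hodd
    have hdvd : (n + 2 * m + 3) ∣ p * 2 ^ k := ⟨n, by rw [← heq]; ring⟩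
    have hdp : (n + 2 * m + 3) ∣ p := hcop.dvd_of_dvd_mul_right hdvd
    rcases (Nat.Prime.eq_one_or_self_of_dvd hp _ hdp) with h1 | h2
    · omega
    · have hnq : p * n = p * 2 ^ k := by
        have h3 : p * n = n * (n + 2 * m + 3) := by rw [h2]; ring
        rw [h3, heq]
      have : n = 2 ^ k := Nat.eq_of_mul_eq_mul_left hp.pos hnq
      omega
  · -- n odd, so n divides p
    have hcop : Nat.Coprime n (2 ^ k) := by
      apply Nat.Coprime.pow_right
      simpa [Nat.coprime_two_right] using ho
    have hdvd : n ∣ p * 2 ^ k := ⟨n + 2 * m + 3, by rw [← heq]⟩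
    have hdp : n ∣ p := hcop.dvd_of_dvd_mul_right hdvd
    rcases (Nat.Prime.eq_one_or_self_of_dvd hp _ hdp) with h1 | h2
    · subst h1
      have : 1 * (1 + 2 * m + 3) = p * (2 * 2 ^ u) := by rw [← hq2]; exact heq
      have h2u : 2 ≤ p * 2 ^ u := by
        have : 1 ≤ 2 ^ u := Nat.one_le_two_pow
        nlinarith [hp.two_le]
      constructor
      · rfl
      · have hm : 2 * m + 4 = 2 * (p * 2 ^ u) := by linarith [this]
        omega
    · have hp0 : 0 < p := hp.pos
      have heq' : p * (n + 2 * m + 3) = p * 2 ^ k := by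
        have h3 : p * (n + 2 * m + 3) = n * (n + 2 * m + 3) := by rw [h2]
        rw [h3, heq]
      have : n + 2 * m + 3 = 2 ^ k :=
        Nat.eq_of_mul_eq_mul_left hp0 heq'
      have h1 : 2 ^ k + 1 ≤ n + 2 * m + 3 := by omega
      omega
end

section
/- (Sylvester) Every integer a > 1 that is not a power of 2 can be expressed as a sum of two or more consecutive positive integers. -/
lemma gauss_icc (m : ℕ) : ∀ n : ℕ, (∑ i ∈ Finset.Icc (m + 1) (m + n), i) * 2 = n * (2 * m + n + 1) := by
  intro n
  induction n with
  | zero => simp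
  | succ n ih =>
    rw [show m + (n+1) = (m+n) + 1 by ring, Finset.sum_Icc_succ_top (by omega)]
    rw [add_mul, ih]; ring

theorem sylvester (a : ℕ) (ha : 1 < a) (h : ¬ ∃ u : ℕ, a = 2 ^ u) :
    ∃ n m : ℕ, 2 ≤ n ∧ a = ∑ i ∈ Finset.Icc (m + 1) (m + n), i := by
  have ha0 : a ≠ 0 := by omega
  set k := a.factorization 2 with hk
  set d := a / 2 ^ k with hd
  have hfac : 2 ^ k * d = a := Nat.ordProj_mul_ordCompl_eq_self a 2
  have hdodd : ¬ 2 ∣ d := Nat.not_dvd_ordCompl (by norm_num) ha0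
  have hd1 : d ≠ 1 := by
    intro h1; rw [h1, mul_one] at hfac; exact h ⟨k, hfac.symm⟩
  have hd0 : d ≠ 0 := by intro h0; rw [h0] at hfac; omega
  have hmod : d % 2 = 1 := Nat.two_dvd_ne_zero.mp hdodd
  clear_value k d
  have hd3 : 3 ≤ d := by omega
  set x := 2 ^ (k + 1) with hx
  have hxy : 2 * a = x * d := by rw [hx, pow_succ, ← hfac]; ring
  have hx2 : 2 ≤ x := by
    calc 2 = 2 ^ 1 := rfl
    _ ≤ 2 ^ (k+1) := Nat.pow_le_pow_right (by norm_num) (by omega)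
  have hxeven : 2 ∣ x := dvd_pow_self 2 (Nat.succ_ne_zero k)
  have hne : x ≠ d := fun he => hdodd (he ▸ hxeven)
  obtain ⟨c, hc⟩ := hxeven
  obtain ⟨e, he⟩ := Nat.odd_iff.mpr (Nat.two_dvd_ne_zero.mp hdodd)
  rcases Nat.lt_or_ge x d with hlt | hge
  · -- n = x, d = x + 2m + 1
    refine ⟨x, (d - x - 1) / 2, hx2, ?_⟩
    have hm : d = x + (2 * ((d - x - 1) / 2) + 1) := by omega
    have := gauss_icc ((d - x - 1) / 2) x
    have h2 : 2 * a = x * (2 * ((d - x - 1) / 2) + x + 1) := by rw [hxy]; nlinarith [hm]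
    omega
  · refine ⟨d, (x - d - 1) / 2, by omega, ?_⟩
    have hm : x = d + (2 * ((x - d - 1) / 2) + 1) := by omega
    have := gauss_icc ((x - d - 1) / 2) d
    -- 2a = x*d = d*(2m+d+1)
    have h2 : 2 * a = d * (2 * ((x - d - 1) / 2) + d + 1) := by rw [hxy]; nlinarith [hm]
    omega
end
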